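/- arXiv:2309.06392 — 5 statements merged into one kernel-verified Lean document; each statement's English description precedes it below -/
import Mathlib

section
/- For a connected undirected graph G on n vertices with Laplacian matrix L, the Moore–Penrose pseudoinverse of L satisfies L† = (L + (1/n)J)⁻¹ − (1/n)J, where J is the all-ones n×n matrix. -/
open Matrix Finset
open scoped Classical

/-- The four Penrose identities: `B` is the Moore–Penrose pseudoinverse of `A`. -/
def IsMoorePenrose {m : Type*} [Fintype m] [DecidableEq m]
    (A B : Matrix m m ℝ) : Prop :=
  A * B * A = A ∧ B * A * B = B ∧ (A * B)ᵀ = A * B ∧ (B * A)ᵀ = B * A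

/-- The Moore–Penrose pseudoinverse (chosen when it exists, `0` otherwise). -/
noncomputable def pinv {m : Type*} [Fintype m] [DecidableEq m]
    (A : Matrix m m ℝ) : Matrix m m ℝ :=
  if h : ∃ B, IsMoorePenrose A B then h.choose else 0

/-- Signed incidence vector `b_{xy} = e_x - e_y`. -/
def incVec {n : ℕ} (x y : Fin n) : Fin n → ℝ :=
  fun i => (if i = x then 1 else 0) - (if i = y then 1 else 0)

/-- Effective resistance between `x` and `y` in `G`. -/
noncomputable def effRes {n : ℕ} (G : SimpleGraph (Fin n)) (x y : Fin n) : ℝ :=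
  incVec x y ⬝ᵥ (pinv (G.lapMatrix ℝ)).mulVec (incVec x y)

/-- Resistance distance of `v`: sum of effective resistances to all other vertices. -/
noncomputable def resDist {n : ℕ} (G : SimpleGraph (Fin n)) (v : Fin n) : ℝ :=
  ∑ u ∈ Finset.univ.erase v, effRes G u v

/-- Information centrality of `v`. -/
noncomputable def infoCent {n : ℕ} (G : SimpleGraph (Fin n)) (v : Fin n) : ℝ :=
  (n : ℝ) / resDist G v

/-! Since `L 𝟙 = 0` and `L` is symmetric, `P = J / n` is the orthogonal projection onto
`span 𝟙`, which is `ker L` when `G` is connected; hence `L + P` is invertible. From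
`(L + P) P = P` one gets `L ((L + P)⁻¹ - P) = ((L + P)⁻¹ - P) L = 1 - P`, a symmetric matrix
fixing both `L` and `(L + P)⁻¹ - P`, and these are the four Penrose identities. -/

namespace Matrix

variable {m : Type*} [Fintype m]

theorem of_const_one_mul_self {α : Type*} [NonAssocSemiring α] :
    (of fun _ _ => (1 : α) : Matrix m m α) * of (fun _ _ => 1) =
      (Fintype.card m : α) • of fun _ _ => 1 := by
  ext i j
  simp [mul_apply]

theorem of_const_one_mulVec {α : Type*} [NonAssocSemiring α] (x : m → α) :
    (of fun _ _ => (1 : α) : Matrix m m α) *ᵥ x = fun _ => ∑ i, x i := by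
  ext i
  simp [mulVec, dotProduct]

theorem isIdempotentElem_one_div_card_smul_of_const_one {K : Type*} [Field K] [CharZero K]
    [Nonempty m] :
    IsIdempotentElem ((1 / (Fintype.card m : K)) • of fun _ _ => (1 : K) : Matrix m m K) := by
  rw [IsIdempotentElem, smul_mul_smul, of_const_one_mul_self, smul_smul]
  congr 1
  field_simp

theorem isUnit_of_forall_mulVec_eq_zero_imp [DecidableEq m] {K : Type*} [Field K]
    {A : Matrix m m K} (h : ∀ x, A *ᵥ x = 0 → x = 0) : IsUnit A := by
  rw [isUnit_iff_isUnit_det, isUnit_iff_ne_zero, Ne, ← exists_mulVec_eq_zero_iff]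
  rintro ⟨x, hx, hAx⟩
  exact hx (h x hAx)

theorem isMoorePenrose_inv_add_sub [DecidableEq m] {A P : Matrix m m ℝ} (hA : Aᵀ = A)
    (hP : Pᵀ = P) (hPP : IsIdempotentElem P) (hAP : A * P = 0) (hunit : IsUnit (A + P)) :
    IsMoorePenrose A ((A + P)⁻¹ - P) := by
  set M := A + P
  have hPA : P * A = 0 := by rw [← hA, ← hP, ← transpose_mul, hAP, transpose_zero]
  have hMP : M * P = P := by rw [add_mul, hAP, hPP.eq, zero_add]
  have hPM : P * M = P := by rw [mul_add, hPA, hPP.eq, zero_add]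
  have hdet : IsUnit M.det := (isUnit_iff_isUnit_det M).mp hunit
  have hMinvP : M⁻¹ * P = P := by
    rw [← hMP, ← Matrix.mul_assoc, nonsing_inv_mul _ hdet, Matrix.one_mul, hMP]
  have hPMinv : P * M⁻¹ = P := by
    rw [← hPM, Matrix.mul_assoc, mul_nonsing_inv _ hdet, Matrix.mul_one, hPM]
  have hAM : A = M - P := (add_sub_cancel_right A P).symm
  have hAB : A * (M⁻¹ - P) = 1 - P := by
    rw [hAM, sub_mul, mul_sub, mul_sub, mul_nonsing_inv _ hdet, hMP, hPMinv, hPP.eq]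
    abel
  have hBA : (M⁻¹ - P) * A = 1 - P := by
    rw [hAM, mul_sub, sub_mul, sub_mul, nonsing_inv_mul _ hdet, hPM, hMinvP, hPP.eq]
    abel
  refine ⟨?_, ?_, ?_, ?_⟩
  · rw [hAB, sub_mul, Matrix.one_mul, hPA, sub_zero]
  · rw [hBA, sub_mul, Matrix.one_mul, mul_sub, hPMinv, hPP.eq, sub_self, sub_zero]
  · rw [hAB, transpose_sub, transpose_one, hP]
  · rw [hBA, transpose_sub, transpose_one, hP]

end Matrix

namespace SimpleGraph

variable {V : Type*} [Fintype V] [DecidableEq V] (G : SimpleGraph V) [DecidableRel G.Adj]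

theorem lapMatrix_mul_of_const_one {R : Type*} [Ring R] :
    G.lapMatrix R * of (fun _ _ => 1) = 0 := by
  ext i j
  simpa [mul_apply, mulVec, dotProduct] using
    congrFun (G.lapMatrix_mulVec_const_eq_zero (R := R)) i

variable {G} in
theorem Connected.isUnit_lapMatrix_add_smul_of_const_one
    (hG : G.Connected) {c : ℝ} (hc : c ≠ 0) :
    IsUnit (G.lapMatrix ℝ + c • of fun _ _ => 1) := by
  have : Nonempty V := hG.nonempty
  refine isUnit_of_forall_mulVec_eq_zero_imp fun x hx => ?_
  rw [add_mulVec, smul_mulVec, of_const_one_mulVec] at hx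
  -- `𝟙ᵀ L = 0`, so pairing with `𝟙` isolates the `J` part
  have hsum : ∑ i, x i = 0 := by
    have h := congrArg ((fun _ => (1 : ℝ)) ⬝ᵥ ·) hx
    simp only [dotProduct_add, dotProduct_mulVec, ← mulVec_transpose,
      (G.isSymm_lapMatrix (R := ℝ)).eq, lapMatrix_mulVec_const_eq_zero, zero_dotProduct,
      dotProduct_smul, zero_add, dotProduct_zero] at h
    simpa [dotProduct, hc] using h
  have hLx : G.lapMatrix ℝ *ᵥ x = 0 := by
    rwa [hsum, ← Pi.zero_def, smul_zero, add_zero] at hx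
  have hconst : ∀ i j, x i = x j := fun i j =>
    (lapMatrix_mulVec_eq_zero_iff_forall_reachable G).mp hLx i j (hG.preconnected i j)
  ext i
  have : ∑ j, x j = Fintype.card V * x i := by
    simp [hconst _ i, Finset.card_univ]
  simpa [hsum, Fintype.card_ne_zero] using this.symm

end SimpleGraph

theorem stmt_0_general {n : ℕ} (G : SimpleGraph (Fin n)) (hG : G.Connected) :
    IsUnit (G.lapMatrix ℝ + (1 / (n : ℝ)) • (Matrix.of fun _ _ => (1 : ℝ))) ∧
    IsMoorePenrose (G.lapMatrix ℝ)
      ((G.lapMatrix ℝ + (1 / (n : ℝ)) • (Matrix.of fun _ _ => (1 : ℝ)))⁻¹ -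
        (1 / (n : ℝ)) • (Matrix.of fun _ _ => (1 : ℝ))) := by
  have : Nonempty (Fin n) := hG.nonempty
  have hn : (n : ℝ) ≠ 0 := by simpa using Fintype.card_ne_zero (α := Fin n)
  have hunit := hG.isUnit_lapMatrix_add_smul_of_const_one (one_div_ne_zero hn)
  refine ⟨hunit, isMoorePenrose_inv_add_sub (G.isSymm_lapMatrix (R := ℝ)).eq ?_ ?_ ?_ hunit⟩
  · rw [transpose_smul]
    rfl
  · simpa only [Fintype.card_fin] using
      isIdempotentElem_one_div_card_smul_of_const_one (m := Fin n) (K := ℝ)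
  · rw [Matrix.mul_smul, G.lapMatrix_mul_of_const_one, smul_zero]

/-- For a connected graph `G` on `n` vertices with Laplacian `L`, the matrix
`L + (1/n)J` is invertible and `(L + (1/n)J)⁻¹ - (1/n)J` is the Moore–Penrose
pseudoinverse of `L`, where `J` is the all-ones matrix. -/
theorem stmt_0 {n : ℕ} (hn : 0 < n) (G : SimpleGraph (Fin n)) (hG : G.Connected) :
    IsUnit (G.lapMatrix ℝ + (1 / (n : ℝ)) • (Matrix.of fun _ _ => (1 : ℝ))) ∧
    IsMoorePenrose (G.lapMatrix ℝ)
      ((G.lapMatrix ℝ + (1 / (n : ℝ)) • (Matrix.of fun _ _ => (1 : ℝ)))⁻¹ -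
        (1 / (n : ℝ)) • (Matrix.of fun _ _ => (1 : ℝ))) :=
  stmt_0_general G hG
end

section
/- Let L be the Laplacian of a connected graph G and e = (x,y) an edge such that G∖{e} is connected. Then b_eᵀ L† b_e < 1, and the pseudoinverse of the Laplacian of G∖{e} is (L − b_e b_eᵀ)† = L† + (L† b_e b_eᵀ L†)/(1 − b_eᵀ L† b_e). -/
/-!
For a real symmetric matrix `A`, the pseudoinverse is `cfc (·⁻¹) A` (invert the nonzero
eigenvalues), so `A` and `A†` commute and `A A†` is the orthogonal projection onto `(ker A)ᗮ`.
The incidence vector `b = b_e` is orthogonal to `ker L`, which consists of the functions constant along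
edges, so `L L† b = b`. Given this and `t = bᵀ L† b ≠ 1`, the Sherman–Morrison candidate satisfies
the four Penrose identities for `L - b bᵀ` by direct algebra.

With `u = L† b` one has `(L - b bᵀ) u = (1 - t) b`. Since `L - b bᵀ` is the Laplacian of `G∖{e}`,
it is positive semidefinite, and pairing with `u` gives `t (1 - t) ≥ 0`, hence `t ≤ 1`. If `t = 1`
then `u` is in the kernel of that Laplacian, hence constant because `G∖{e}` is connected, and
then `t = bᵀ u = u x - u y = 0`.
-/

open Matrix Finset
open scoped Classical

namespace IsMoorePenrose

variable {m : Type*} [Fintype m] [DecidableEq m] {A B C : Matrix m m ℝ}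

theorem unique (hB : IsMoorePenrose A B) (hC : IsMoorePenrose A C) : B = C := by
  obtain ⟨hB1, hB2, hB3, hB4⟩ := hB
  obtain ⟨hC1, hC2, hC3, hC4⟩ := hC
  have hAB : A * B = A * C :=
    calc A * B = (A * C * (A * B))ᵀ := by rw [← Matrix.mul_assoc, hC1, hB3]
      _ = A * B * (A * C) := by rw [transpose_mul, hB3, hC3]
      _ = A * C := by rw [← Matrix.mul_assoc, hB1]
  have hBA : B * A = C * A :=
    calc B * A = (B * A * (C * A))ᵀ := by rw [Matrix.mul_assoc, ← Matrix.mul_assoc A, hC1, hB4]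
      _ = C * A * (B * A) := by rw [transpose_mul, hB4, hC4]
      _ = C * A := by rw [Matrix.mul_assoc, ← Matrix.mul_assoc A, hB1]
  calc B = B * A * B := hB2.symm
    _ = C * A * C := by rw [hBA, Matrix.mul_assoc, hAB, ← Matrix.mul_assoc]
    _ = C := hC2

theorem pinv_eq (h : IsMoorePenrose A B) : pinv A = B := by
  have hex : ∃ C, IsMoorePenrose A C := ⟨B, h⟩
  rw [pinv, dif_pos hex]
  exact hex.choose_spec.unique h

/-- `u = b - A B b` lies in `ker A`, and `A B` is a symmetric projection killing `ker A`,
so `u ⬝ᵥ u = u ⬝ᵥ b = 0`. -/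
theorem mul_mulVec_eq_self (h : IsMoorePenrose A B) (hcomm : Commute A B) {b : m → ℝ}
    (hb : ∀ z, A *ᵥ z = 0 → b ⬝ᵥ z = 0) : (A * B) *ᵥ b = b := by
  set u := b - (A * B) *ᵥ b
  have hAu : A *ᵥ u = 0 := by
    rw [mulVec_sub, mulVec_mulVec, hcomm.eq, ← Matrix.mul_assoc, h.1, sub_self]
  have hPu : (A * B) *ᵥ u = 0 := by rw [hcomm.eq, ← mulVec_mulVec, hAu, mulVec_zero]
  have huu : u ⬝ᵥ u = 0 :=
    calc u ⬝ᵥ u = u ⬝ᵥ b - u ⬝ᵥ (A * B) *ᵥ b := dotProduct_sub _ _ _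
      _ = b ⬝ᵥ u - (A * B) *ᵥ u ⬝ᵥ b := by
        rw [dotProduct_comm u b, dotProduct_mulVec, ← mulVec_transpose, h.2.2.1]
      _ = 0 := by rw [hb u hAu, hPu, zero_dotProduct, sub_zero]
  exact (sub_eq_zero.mp (dotProduct_self_eq_zero.mp huu)).symm

theorem sub_vecMulVec (h : IsMoorePenrose A B) (hcomm : Commute A B) {b : m → ℝ}
    (hb : (A * B) *ᵥ b = b) (ht : b ⬝ᵥ B *ᵥ b ≠ 1) :
    IsMoorePenrose (A - vecMulVec b b)
      (B + (1 - b ⬝ᵥ B *ᵥ b)⁻¹ • (B * vecMulVec b b * B)) := by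
  obtain ⟨hPA, hBAB, hPt, -⟩ := h
  set t := b ⬝ᵥ B *ᵥ b
  set P := A * B
  set E := vecMulVec b b
  have hBA : B * A = P := hcomm.eq.symm
  have hPB : P * B = B := by rw [← hBA, hBAB]
  have hPE : P * E = E := by rw [mul_vecMulVec, hb]
  have hEP : E * P = E := by rw [vecMulVec_mul, ← mulVec_transpose, hPt, hb]
  have hEBE : E * B * E = t • E := by
    rw [vecMulVec_mul, vecMulVec_mul_vecMulVec, ← dotProduct_mulVec, vecMulVec_smul]
  -- the identity that singles out the Sherman–Morrison coefficient `(1 - t)⁻¹`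
  have hc : (1 - t)⁻¹ * t = (1 - t)⁻¹ - 1 := by
    field_simp [sub_ne_zero.mpr ht.symm]
    ring
  have hleft : (A - E) * (B + (1 - t)⁻¹ • (B * E * B)) = P := by
    have hABEB : A * (B * E * B) = E * B := by
      rw [← Matrix.mul_assoc, ← Matrix.mul_assoc, hPE]
    have hEBEB : E * (B * E * B) = t • (E * B) := by
      rw [← Matrix.mul_assoc, ← Matrix.mul_assoc, hEBE, smul_mul_assoc]
    rw [sub_mul, mul_add, mul_add, mul_smul_comm, mul_smul_comm, hABEB, hEBEB, smul_smul, hc,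
      sub_smul, one_smul]
    abel
  have hright : (B + (1 - t)⁻¹ • (B * E * B)) * (A - E) = P := by
    have hBEBA : B * E * B * A = B * E := by
      rw [Matrix.mul_assoc, hBA, Matrix.mul_assoc, hEP]
    have hBEBE : B * E * B * E = t • (B * E) := by
      rw [Matrix.mul_assoc, Matrix.mul_assoc, ← Matrix.mul_assoc E, hEBE, mul_smul_comm]
    rw [add_mul, mul_sub, mul_sub, smul_mul_assoc, smul_mul_assoc, hBEBA, hBEBE, hBA, smul_smul,
      hc, sub_smul, one_smul]
    abel
  refine ⟨?_, ?_, by rw [hleft, hPt], by rw [hright, hPt]⟩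
  · rw [hleft, mul_sub, hPA, hPE]
  · rw [hright, mul_add, mul_smul_comm, ← Matrix.mul_assoc, ← Matrix.mul_assoc, hPB]

end IsMoorePenrose

namespace Matrix

section

variable {m : Type*} [Fintype m] {A B : Matrix m m ℝ} {b : m → ℝ}

theorem sub_vecMulVec_mulVec_mulVec (hb : (A * B) *ᵥ b = b) :
    (A - vecMulVec b b) *ᵥ (B *ᵥ b) = (1 - b ⬝ᵥ B *ᵥ b) • b := by
  rw [sub_mulVec, mulVec_mulVec, hb, vecMulVec_mulVec, op_smul_eq_smul, sub_smul, one_smul]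

theorem dotProduct_mulVec_le_one (hb : (A * B) *ᵥ b = b)
    (hpsd : (A - vecMulVec b b).PosSemidef) : b ⬝ᵥ B *ᵥ b ≤ 1 := by
  have h := hpsd.dotProduct_mulVec_nonneg (B *ᵥ b)
  rw [star_trivial, sub_vecMulVec_mulVec_mulVec hb, dotProduct_smul, smul_eq_mul,
    dotProduct_comm (B *ᵥ b)] at h
  nlinarith

end

namespace IsHermitian

variable {m : Type*} [Fintype m] [DecidableEq m] {A : Matrix m m ℝ}

theorem isMoorePenrose_cfc_inv (hA : A.IsHermitian) :
    IsMoorePenrose A (cfc (·⁻¹ : ℝ → ℝ) A) := by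
  have hA' : IsSelfAdjoint A := hA
  have hmul (f g : ℝ → ℝ) : cfc f A * cfc g A = cfc (fun x => f x * g x) A :=
    (cfc_mul f g A ((finite_spectrum A).continuousOn _) ((finite_spectrum A).continuousOn _)).symm
  have hid : cfc (fun x : ℝ => x) A = A := cfc_id' ℝ A
  have hmul_id (f : ℝ → ℝ) : cfc f A * A = cfc (fun x => f x * x) A := by rw [← hmul, hid]
  have hid_mul (f : ℝ → ℝ) : A * cfc f A = cfc (fun x => x * f x) A := by rw [← hmul, hid]
  have htr (f : ℝ → ℝ) : (cfc f A)ᵀ = cfc f A := by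
    simpa [IsSelfAdjoint, star_eq_conjTranspose] using cfc_predicate f A
  refine ⟨?_, ?_, by rw [hid_mul, htr], by rw [hmul_id, htr]⟩
  · rw [hid_mul, hmul_id]
    exact (cfc_congr fun x _ => mul_inv_mul_cancel x).trans hid
  · rw [hmul_id, hmul]
    exact cfc_congr fun x _ => by simpa using mul_inv_mul_cancel x⁻¹

theorem isMoorePenrose_pinv (hA : A.IsHermitian) : IsMoorePenrose A (pinv A) :=
  hA.isMoorePenrose_cfc_inv.pinv_eq ▸ hA.isMoorePenrose_cfc_inv

theorem commute_pinv (hA : A.IsHermitian) : Commute A (pinv A) := by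
  rw [hA.isMoorePenrose_cfc_inv.pinv_eq]
  have hA' : IsSelfAdjoint A := hA
  simpa only [cfc_id' ℝ A] using cfc_commute_cfc (fun x : ℝ => x) (·⁻¹) A

end IsHermitian

end Matrix

theorem incVec_dotProduct {n : ℕ} (x y : Fin n) (z : Fin n → ℝ) :
    incVec x y ⬝ᵥ z = z x - z y := by
  simp [incVec, dotProduct, sub_mul, Finset.sum_sub_distrib]

namespace SimpleGraph

section

variable {V : Type*} [DecidableEq V] {G : SimpleGraph V} {x y : V}

theorem ite_adj_deleteEdges_edge (hxy : G.Adj x y) (i k : V) :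
    (if (G.deleteEdges {s(x, y)}).Adj i k then (1 : ℝ) else 0) =
      (if G.Adj i k then 1 else 0) -
        ((if i = x ∧ k = y then 1 else 0) + (if i = y ∧ k = x then 1 else 0)) := by
  grind [deleteEdges_adj, Sym2.eq_iff, hxy.ne, hxy.symm]

theorem degree_deleteEdges_edge [Fintype V] (hxy : G.Adj x y) (i : V) :
    ((G.deleteEdges {s(x, y)}).degree i : ℝ) =
      G.degree i - ((if i = x then 1 else 0) + (if i = y then 1 else 0)) := by
  rw [degree_eq_sum_if_adj, degree_eq_sum_if_adj]
  simp only [ite_adj_deleteEdges_edge hxy, Finset.sum_sub_distrib, Finset.sum_add_distrib]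
  simp [ite_and]

end

theorem lapMatrix_deleteEdges_edge {n : ℕ} {G : SimpleGraph (Fin n)} {x y : Fin n}
    (hxy : G.Adj x y) :
    (G.deleteEdges {s(x, y)}).lapMatrix ℝ =
      G.lapMatrix ℝ - vecMulVec (incVec x y) (incVec x y) := by
  ext i j
  simp only [lapMatrix, degMatrix, Matrix.sub_apply, diagonal_apply, adjMatrix_apply,
    degree_deleteEdges_edge hxy, ite_adj_deleteEdges_edge hxy, vecMulVec_apply, incVec]
  grind

end SimpleGraph

theorem stmt_3_general {n : ℕ} (G : SimpleGraph (Fin n)) (x y : Fin n)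
    (hxy : G.Adj x y) (hconn : (G.deleteEdges {s(x, y)}).Connected) :
    incVec x y ⬝ᵥ (pinv (G.lapMatrix ℝ)).mulVec (incVec x y) < 1 ∧
    pinv (G.lapMatrix ℝ - Matrix.vecMulVec (incVec x y) (incVec x y)) =
      pinv (G.lapMatrix ℝ) +
        (1 - incVec x y ⬝ᵥ (pinv (G.lapMatrix ℝ)).mulVec (incVec x y))⁻¹ •
          (pinv (G.lapMatrix ℝ) * Matrix.vecMulVec (incVec x y) (incVec x y) *
            pinv (G.lapMatrix ℝ)) := by
  set b := incVec x y
  set L := G.lapMatrix ℝ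
  have hL : L.IsHermitian := G.isHermitian_lapMatrix ℝ
  have hMP := hL.isMoorePenrose_pinv
  have hcomm := hL.commute_pinv
  have hb : (L * pinv L) *ᵥ b = b := hMP.mul_mulVec_eq_self hcomm fun z hz => by
    rw [incVec_dotProduct, sub_eq_zero]
    exact (G.lapMatrix_mulVec_eq_zero_iff_forall_adj.mp hz) x y hxy
  have hdel := G.lapMatrix_deleteEdges_edge hxy
  have ht_ne : b ⬝ᵥ pinv L *ᵥ b ≠ 1 := by
    intro ht
    have hker : (G.deleteEdges {s(x, y)}).lapMatrix ℝ *ᵥ (pinv L *ᵥ b) = 0 := by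
      rw [hdel, sub_vecMulVec_mulVec_mulVec hb, ht, sub_self, zero_smul]
    have hconst := (G.deleteEdges _).lapMatrix_mulVec_eq_zero_iff_forall_reachable.mp hker x y
      (hconn.preconnected x y)
    rw [incVec_dotProduct, hconst, sub_self] at ht
    exact zero_ne_one ht
  have ht_le := dotProduct_mulVec_le_one hb (hdel ▸ (G.deleteEdges _).posSemidef_lapMatrix ℝ)
  exact ⟨ht_le.lt_of_ne ht_ne, (hMP.sub_vecMulVec hcomm hb ht_ne).pinv_eq⟩

/-- Sherman–Morrison update for the Laplacian pseudoinverse: if `e = (x,y)` is an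
edge of the connected graph `G` whose removal keeps `G` connected, then
`b_eᵀ L† b_e < 1` and `(L - b_e b_eᵀ)† = L† + (L† b_e b_eᵀ L†)/(1 - b_eᵀ L† b_e)`,
where `L - b_e b_eᵀ` is the Laplacian of `G∖{e}`. -/
theorem stmt_3 {n : ℕ} (G : SimpleGraph (Fin n)) (hG : G.Connected) (x y : Fin n)
    (hxy : G.Adj x y) (hconn : (G.deleteEdges {s(x, y)}).Connected) :
    incVec x y ⬝ᵥ (pinv (G.lapMatrix ℝ)).mulVec (incVec x y) < 1 ∧
    pinv (G.lapMatrix ℝ - Matrix.vecMulVec (incVec x y) (incVec x y)) =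
      pinv (G.lapMatrix ℝ) +
        (1 - incVec x y ⬝ᵥ (pinv (G.lapMatrix ℝ)).mulVec (incVec x y))⁻¹ •
          (pinv (G.lapMatrix ℝ) * Matrix.vecMulVec (incVec x y) (incVec x y) *
            pinv (G.lapMatrix ℝ)) :=
  stmt_3_general G x y hxy hconn
end

section
/- Rayleigh monotonicity for edge removal: if G is connected, e ∈ E is an edge such that G∖{e} is connected, then for every pair of vertices x, y the effective resistance in G∖{e} is at least the effective resistance in G. -/
open Matrix Finset
open scoped Classical

/-!
Write `L` and `L'` for the Laplacians of `G` and of `G' = G ∖ {e}`, and `c = b_{ab}`. Both graphs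
are connected, so the kernels of `L` and `L'` consist of the constants, which are orthogonal to
`c`; hence `u = L† c` and `u' = L'† c` solve `L u = c` and `L' u' = c`, and `R_{ab} = c ⬝ u`,
`R'_{ab} = c ⬝ u'`. Deleting an edge only decreases the Dirichlet energy, `xᵀ L' x ≤ xᵀ L x`, and
expanding `0 ≤ (u - u')ᵀ L' (u - u')` gives `c ⬝ u ≤ c ⬝ u'`.
-/

open SimpleGraph

section LinearAlgebra

variable {m : Type*} [Fintype m]

theorem Matrix.PosSemidef.dotProduct_le_of_mulVec_eq {A A' : Matrix m m ℝ} (hA' : A'.PosSemidef)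
    (hle : ∀ x, x ⬝ᵥ (A' *ᵥ x) ≤ x ⬝ᵥ (A *ᵥ x)) {c u u' : m → ℝ} (hu : A *ᵥ u = c)
    (hu' : A' *ᵥ u' = c) : c ⬝ᵥ u ≤ c ⬝ᵥ u' := by
  have hA'_symm : A'ᵀ = A' := isHermitian_iff_isSymm.mp hA'.1
  have hcross : u' ⬝ᵥ (A' *ᵥ u) = c ⬝ᵥ u := by
    rw [dotProduct_mulVec, ← mulVec_transpose, hA'_symm, hu']
  have hexpand : (u - u') ⬝ᵥ (A' *ᵥ (u - u')) = u ⬝ᵥ (A' *ᵥ u) - 2 * (c ⬝ᵥ u) + c ⬝ᵥ u' := by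
    rw [mulVec_sub, dotProduct_sub, sub_dotProduct, sub_dotProduct, hu', hcross,
      dotProduct_comm u c, dotProduct_comm u' c]
    ring
  have hnonneg := hA'.dotProduct_mulVec_nonneg (u - u')
  have henergy : u ⬝ᵥ (A *ᵥ u) = c ⬝ᵥ u := by rw [hu, dotProduct_comm]
  rw [star_trivial] at hnonneg
  linarith [hle u]

variable [DecidableEq m]

/-- For symmetric `A`, inverting the nonzero eigenvalues (`0⁻¹ = 0` in `ℝ`) gives `A†`. -/
theorem Matrix.IsHermitian.isMoorePenrose_cfc_inv_s5 {A : Matrix m m ℝ} (hA : A.IsHermitian) :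
    IsMoorePenrose A (cfc (·⁻¹ : ℝ → ℝ) A) := by
  have hmul (f g : ℝ → ℝ) : cfc f A * cfc g A = cfc (fun t => f t * g t) A :=
    (cfc_mul f g A (A.finite_spectrum.continuousOn f) (A.finite_spectrum.continuousOn g)).symm
  have htranspose (f : ℝ → ℝ) : (cfc f A)ᵀ = cfc f A := by
    rw [← conjTranspose_eq_transpose_of_trivial]; exact cfc_predicate f A
  have hid : cfc id A = A := cfc_id ℝ A hA
  refine ⟨?_, ?_, ?_, ?_⟩
  · calc A * cfc (·⁻¹) A * A = cfc id A * cfc (·⁻¹) A * cfc id A := by rw [hid]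
      _ = cfc id A := by rw [hmul, hmul]; congr 1; funext t; exact mul_inv_mul_cancel t
      _ = A := hid
  · calc cfc (·⁻¹) A * A * cfc (·⁻¹) A = cfc (·⁻¹) A * cfc id A * cfc (·⁻¹) A := by rw [hid]
      _ = cfc (·⁻¹) A := by
        rw [hmul, hmul]; congr 1; funext t; simpa using mul_inv_mul_cancel t⁻¹
  · simpa only [← hmul, hid] using htranspose (fun t => id t * t⁻¹)
  · simpa only [← hmul, hid] using htranspose (fun t => t⁻¹ * id t)

theorem Matrix.IsHermitian.isMoorePenrose_pinv_s5 {A : Matrix m m ℝ} (hA : A.IsHermitian) :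
    IsMoorePenrose A (pinv A) := by
  have h : ∃ B, IsMoorePenrose A B := ⟨_, hA.isMoorePenrose_cfc_inv_s5⟩
  rw [pinv, dif_pos h]
  exact h.choose_spec

/-- `A B` is the orthogonal projection onto the range of `A`, which for symmetric `A` is the
orthogonal complement of its kernel. -/
theorem IsMoorePenrose.mulVec_mulVec_eq_self {A B : Matrix m m ℝ} (hA : Aᵀ = A)
    (hB : IsMoorePenrose A B) {b : m → ℝ} (hb : ∀ v, A *ᵥ v = 0 → v ⬝ᵥ b = 0) :
    A *ᵥ (B *ᵥ b) = b := by
  obtain ⟨hABA, -, hAB, -⟩ := hB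
  have hAAB : A * A * B = A :=
    calc A * A * B = Aᵀ * (A * B)ᵀ := by rw [hA, hAB, mul_assoc]
      _ = (A * B * A)ᵀ := (transpose_mul _ _).symm
      _ = A := by rw [hABA, hA]
  set w := b - A *ᵥ (B *ᵥ b) with hw
  have hAw : A *ᵥ w = 0 := by
    rw [mulVec_sub, mulVec_mulVec, mulVec_mulVec, hAAB, sub_self]
  have hw_range : w ⬝ᵥ (A *ᵥ (B *ᵥ b)) = 0 := by
    rw [dotProduct_mulVec, ← mulVec_transpose, hA, hAw, zero_dotProduct]
  have hww : w ⬝ᵥ w = 0 := by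
    nth_rw 2 [hw]
    rw [dotProduct_sub, hb w hAw, hw_range, sub_self]
  exact (sub_eq_zero.mp (dotProduct_self_eq_zero.mp hww)).symm

end LinearAlgebra

section Laplacian

variable {V : Type*} [Fintype V] [DecidableEq V]

theorem SimpleGraph.Connected.lapMatrix_mulVec_pinv_mulVec {G : SimpleGraph V} [DecidableRel G.Adj]
    (hG : G.Connected) {b : V → ℝ} (hb : ∑ i, b i = 0) :
    G.lapMatrix ℝ *ᵥ (pinv (G.lapMatrix ℝ) *ᵥ b) = b := by
  refine (G.isHermitian_lapMatrix ℝ).isMoorePenrose_pinv_s5.mulVec_mulVec_eq_self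
    (G.isSymm_lapMatrix ℝ) fun v hv => ?_
  obtain ⟨i₀⟩ := hG.nonempty
  have hconst (i : V) : v i = v i₀ :=
    (lapMatrix_mulVec_eq_zero_iff_forall_reachable G).mp hv i i₀ (hG.preconnected i i₀)
  simp only [dotProduct, hconst, ← mul_sum, hb, mul_zero]

theorem SimpleGraph.dotProduct_lapMatrix_mulVec_le_of_le {G G' : SimpleGraph V}
    [DecidableRel G.Adj] [DecidableRel G'.Adj] (h : G' ≤ G) (x : V → ℝ) :
    x ⬝ᵥ (G'.lapMatrix ℝ *ᵥ x) ≤ x ⬝ᵥ (G.lapMatrix ℝ *ᵥ x) := by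
  rw [← toLinearMap₂'_apply', ← toLinearMap₂'_apply', lapMatrix_toLinearMap₂',
    lapMatrix_toLinearMap₂']
  gcongr with i _ j _
  split_ifs with hG'adj hGadj
  · exact le_rfl
  · exact absurd (h hG'adj) hGadj
  · positivity
  · exact le_rfl

end Laplacian

theorem sum_incVec {n : ℕ} (x y : Fin n) : ∑ i, incVec x y i = 0 := by
  simp [incVec, sum_sub_distrib]

theorem effRes_le_of_le {n : ℕ} {G G' : SimpleGraph (Fin n)} (h : G' ≤ G) (hG' : G'.Connected)
    (a b : Fin n) : effRes G a b ≤ effRes G' a b :=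
  (posSemidef_lapMatrix ℝ G').dotProduct_le_of_mulVec_eq (dotProduct_lapMatrix_mulVec_le_of_le h)
    ((hG'.mono h).lapMatrix_mulVec_pinv_mulVec (sum_incVec a b))
    (hG'.lapMatrix_mulVec_pinv_mulVec (sum_incVec a b))

theorem stmt_5_general {n : ℕ} (G : SimpleGraph (Fin n)) (x y : Fin n)
    (hconn : (G.deleteEdges {s(x, y)}).Connected) :
    ∀ a b : Fin n, effRes G a b ≤ effRes (G.deleteEdges {s(x, y)}) a b :=
  effRes_le_of_le (G.deleteEdges_le _) hconn

/-- Rayleigh monotonicity for edge removal: if `G` is connected, `e = (x,y)` an edge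
of `G` such that `G∖{e}` is connected, then for every pair of vertices the effective
resistance in `G∖{e}` is at least the effective resistance in `G`. -/
theorem stmt_5 {n : ℕ} (G : SimpleGraph (Fin n)) (hG : G.Connected) (x y : Fin n)
    (hxy : G.Adj x y) (hconn : (G.deleteEdges {s(x, y)}).Connected) :
    ∀ a b : Fin n, effRes G a b ≤ effRes (G.deleteEdges {s(x, y)}) a b :=
  stmt_5_general G x y hconn
end

section
/- The set function P ↦ I_v(P), the information centrality of a target node after removing edge set P, is not supermodular in general: there exist a connected 5-vertex graph G, a target vertex v, edges e₁, e₂ ∈ E, and sets S = ∅ ⊂ H = {e₁} such that I_v(S) − I_v(S ∪ {e₂}) < I_v(H) − I_v(H ∪ {e₂}). -/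
open Matrix Finset
open scoped Classical

/-!
Take `K₄` on `{0, 1, 2, 3}` minus the edge `23`, with a pendant vertex `4` on `0`, target `0`,
`e₁ = 01` and `e₂ = 02`. The resistance distances of `0` in `G`, `G - e₁`, `G - e₂` and
`G - e₁ - e₂` are `11/4`, `7/2`, `4` and `7`, so `I₀ = 5 / R` drops by `25/44` when `e₂` is
removed from `G` but by `5/7` when it is removed after `e₁`. The resistances are read off
explicit pseudoinverses of the Laplacians, certified through the Penrose identities by integer
matrix products.
-/

lemma IsMoorePenrose.unique_s7 {m : Type*} [Fintype m] [DecidableEq m] {A B C : Matrix m m ℝ}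
    (hB : IsMoorePenrose A B) (hC : IsMoorePenrose A C) : B = C := by
  obtain ⟨hABA, hBAB, hAB, hBA⟩ := hB
  obtain ⟨hACA, hCAC, hAC, hCA⟩ := hC
  have hAB_eq : A * B = A * C := calc
    A * B = (A * C * (A * B))ᵀ := by rw [← mul_assoc, hACA, hAB]
    _ = A * B * (A * C) := by rw [transpose_mul, hAB, hAC]
    _ = A * C := by rw [← mul_assoc, hABA]
  have hBA_eq : B * A = C * A := calc
    B * A = (B * A * (C * A))ᵀ := by rw [← mul_assoc, mul_assoc B A C, mul_assoc B, hACA, hBA]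
    _ = C * A * (B * A) := by rw [transpose_mul, hBA, hCA]
    _ = C * A := by rw [mul_assoc, ← mul_assoc A, hABA]
  rw [← hBAB, hBA_eq, mul_assoc, hAB_eq, ← mul_assoc, hCAC]

lemma pinv_eq_of_isMoorePenrose {m : Type*} [Fintype m] [DecidableEq m] {A B : Matrix m m ℝ}
    (h : IsMoorePenrose A B) : pinv A = B := by
  have hex : ∃ C, IsMoorePenrose A C := ⟨B, h⟩
  rw [pinv, dif_pos hex]
  exact hex.choose_spec.unique_s7 h

lemma isMoorePenrose_of_mul_eq {m : Type*} [Fintype m] [DecidableEq m] {A B Q : Matrix m m ℝ}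
    (hAB : A * B = Q) (hBA : B * A = Q) (hQ : Qᵀ = Q) (hQA : Q * A = A) (hQB : Q * B = B) :
    IsMoorePenrose A B :=
  ⟨by rw [hAB, hQA], by rw [hBA, hQB], by rw [hAB, hQ], by rw [hBA, hQ]⟩

lemma incVec_eq_single_sub_single {n : ℕ} (x y : Fin n) :
    incVec x y = Pi.single x 1 - Pi.single y 1 := by
  ext i
  simp only [incVec, Pi.sub_apply, Pi.single_apply]

lemma incVec_dotProduct_mulVec_incVec {n : ℕ} (B : Matrix (Fin n) (Fin n) ℝ) (x y : Fin n) :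
    incVec x y ⬝ᵥ B *ᵥ incVec x y = B x x - B x y - B y x + B y y := by
  simp only [incVec_eq_single_sub_single, mulVec_sub, dotProduct_sub, sub_dotProduct,
    mulVec_single_one, single_one_dotProduct, col_apply]
  ring

lemma lapMatrix_map_intCast {V : Type*} [Fintype V] [DecidableEq V] (G : SimpleGraph V)
    [DecidableRel G.Adj] (R : Type*) [AddGroupWithOne R] :
    (G.lapMatrix ℤ).map (Int.cast : ℤ → R) = G.lapMatrix R := by
  ext i j
  by_cases h : i = j <;>
    simp [SimpleGraph.lapMatrix, SimpleGraph.degMatrix, SimpleGraph.adjMatrix_apply,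
      h, apply_ite (Int.cast : ℤ → R)]

/-- `n` times the orthogonal projection onto the vectors with zero sum. -/
def scaledCentering (n : ℕ) : Matrix (Fin n) (Fin n) ℤ :=
  (n : ℤ) • 1 - of fun _ _ => 1

lemma transpose_scaledCentering (n : ℕ) : (scaledCentering n)ᵀ = scaledCentering n := by
  rw [scaledCentering, transpose_sub, transpose_smul, transpose_one]
  rfl

lemma isMoorePenrose_of_scaledPinv {n : ℕ} (hn : n ≠ 0) {L P : Matrix (Fin n) (Fin n) ℤ}
    {c : ℤ} (hc : c ≠ 0) (hLP : L * P = c • scaledCentering n)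
    (hPL : P * L = c • scaledCentering n) (hCL : scaledCentering n * L = (n : ℤ) • L)
    (hCP : scaledCentering n * P = (n : ℤ) • P) :
    IsMoorePenrose (L.map (↑)) (((n : ℝ) * c)⁻¹ • P.map (↑)) := by
  set φ := (Int.castRingHom ℝ).mapMatrix (m := Fin n)
  have hφ : ∀ (k : ℤ) (X : Matrix (Fin n) (Fin n) ℤ), φ (k • X) = (k : ℝ) • φ X := by
    intro k X; rw [map_zsmul, Int.cast_smul_eq_zsmul]
  have hn' : (n : ℝ) ≠ 0 := Nat.cast_ne_zero.2 hn
  have hc' : (c : ℝ) ≠ 0 := Int.cast_ne_zero.2 hc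
  refine isMoorePenrose_of_mul_eq (A := φ L) (B := ((n : ℝ) * c)⁻¹ • φ P)
    (Q := (n : ℝ)⁻¹ • φ (scaledCentering n)) ?_ ?_ ?_ ?_ ?_
  · rw [mul_smul_comm, ← map_mul, hLP, hφ, smul_smul]
    congr 1; field_simp
  · rw [smul_mul_assoc, ← map_mul, hPL, hφ, smul_smul]
    congr 1; field_simp
  · rw [transpose_smul, RingHom.mapMatrix_apply, ← transpose_map, transpose_scaledCentering]
  · rw [smul_mul_assoc, ← map_mul, hCL, hφ, smul_smul, Int.cast_natCast, inv_mul_cancel₀ hn',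
      one_smul]
  · rw [smul_mul_assoc, mul_smul_comm, ← map_mul, hCP, hφ, smul_smul, smul_smul,
      Int.cast_natCast]
    congr 1; field_simp

/-- An integer certificate for the pseudoinverse `(n * c)⁻¹ • P` of the Laplacian turns the
resistance distance into an integer sum. -/
lemma resDist_eq_of_scaledPinv {n : ℕ} (hn : n ≠ 0) (G : SimpleGraph (Fin n))
    [inst : DecidableRel G.Adj] (P : Matrix (Fin n) (Fin n) ℤ) {c s : ℤ} (hc : c ≠ 0)
    (hLP : G.lapMatrix ℤ * P = c • scaledCentering n)
    (hPL : P * G.lapMatrix ℤ = c • scaledCentering n)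
    (hCL : scaledCentering n * G.lapMatrix ℤ = (n : ℤ) • G.lapMatrix ℤ)
    (hCP : scaledCentering n * P = (n : ℤ) • P) (v : Fin n)
    (hs : ∑ u ∈ univ.erase v, (P u u - P u v - P v u + P v v) = s) :
    resDist G v = s / (n * c) := by
  -- `resDist` is built on the classical decidability instance
  obtain rfl : inst = fun a b => Classical.propDecidable (G.Adj a b) := Subsingleton.elim _ _
  have hpinv := pinv_eq_of_isMoorePenrose (isMoorePenrose_of_scaledPinv hn hc hLP hPL hCL hCP)
  rw [lapMatrix_map_intCast] at hpinv
  simp only [resDist, effRes, hpinv, incVec_dotProduct_mulVec_incVec, Matrix.smul_apply,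
    map_apply, smul_eq_mul, ← mul_sub, ← mul_add, ← Finset.mul_sum]
  rw [← hs]
  push_cast
  field_simp

abbrev exampleGraph : SimpleGraph (Fin 5) :=
  SimpleGraph.fromEdgeSet {s(0, 1), s(0, 2), s(0, 3), s(0, 4), s(1, 2), s(1, 3)}

lemma resDist_exampleGraph : resDist exampleGraph 0 = 11 / 4 := by
  rw [resDist_eq_of_scaledPinv (by norm_num) _
    !![32, -8, -8, -8, -8; -8, 52, 2, 2, -48; -8, 2, 77, -23, -48; -8, 2, -23, 77, -48;
      -8, -48, -48, -48, 152] (c := 40) (s := 550) (by norm_num)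
    (by decide) (by decide) (by decide) (by decide) 0 (by decide)]
  norm_num

lemma resDist_exampleGraph_delete₁ : resDist (exampleGraph.deleteEdges {s(0, 1)}) 0 = 7 / 2 := by
  rw [resDist_eq_of_scaledPinv (by norm_num) _
    !![24, -16, -6, -6, 4; -16, 44, 4, 4, -36; -6, 4, 39, -11, -26; -6, 4, -11, 39, -26;
      4, -36, -26, -26, 84] (c := 20) (s := 350) (by norm_num)
    (by decide) (by decide) (by decide) (by decide) 0 (by decide)]
  norm_num

lemma resDist_exampleGraph_delete₂ : resDist (exampleGraph.deleteEdges {s(0, 2)}) 0 = 4 := by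
  rw [resDist_eq_of_scaledPinv (by norm_num) _
    !![4, -1, -4, 0, 1; -1, 4, 1, 0, -4; -4, 1, 13, -3, -7; 0, 0, -3, 6, -3; 1, -4, -7, -3, 13]
    (c := 3) (s := 60) (by norm_num)
    (by decide) (by decide) (by decide) (by decide) 0 (by decide)]
  norm_num

lemma resDist_exampleGraph_delete₁₂ :
    resDist (exampleGraph.deleteEdges {s(0, 1), s(0, 2)}) 0 = 7 := by
  rw [resDist_eq_of_scaledPinv (by norm_num) _
    !![3, -2, -3, 0, 2; -2, 3, 2, 0, -3; -3, 2, 6, -1, -4; 0, 0, -1, 2, -1; 2, -3, -4, -1, 6]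
    (c := 1) (s := 35) (by norm_num)
    (by decide) (by decide) (by decide) (by decide) 0 (by decide)]
  norm_num

lemma connected_exampleGraph_delete₁₂ :
    (exampleGraph.deleteEdges {s(0, 1), s(0, 2)}).Connected := by
  rw [SimpleGraph.connected_iff_exists_forall_reachable]
  refine ⟨3, fun w => ?_⟩
  have h30 : (exampleGraph.deleteEdges {s(0, 1), s(0, 2)}).Adj 3 0 := by decide
  have h31 : (exampleGraph.deleteEdges {s(0, 1), s(0, 2)}).Adj 3 1 := by decide
  have h12 : (exampleGraph.deleteEdges {s(0, 1), s(0, 2)}).Adj 1 2 := by decide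
  have h04 : (exampleGraph.deleteEdges {s(0, 1), s(0, 2)}).Adj 0 4 := by decide
  fin_cases w
  · exact h30.reachable
  · exact h31.reachable
  · exact h31.reachable.trans h12.reachable
  · rfl
  · exact h30.reachable.trans h04.reachable

/-- Non-supermodularity of information centrality: there is a connected 5-vertex graph
`G`, a target vertex `v`, and distinct edges `e₁, e₂` (all removals keeping the graph
connected) such that with `S = ∅` and `H = {e₁}`,
`I_v(S) - I_v(S ∪ {e₂}) < I_v(H) - I_v(H ∪ {e₂})`. -/
theorem stmt_7 :
    ∃ (G : SimpleGraph (Fin 5)) (v : Fin 5) (e₁ e₂ : Sym2 (Fin 5)),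
      G.Connected ∧ e₁ ∈ G.edgeSet ∧ e₂ ∈ G.edgeSet ∧ e₁ ≠ e₂ ∧
      (G.deleteEdges {e₁}).Connected ∧ (G.deleteEdges {e₂}).Connected ∧
      (G.deleteEdges {e₁, e₂}).Connected ∧
      infoCent G v - infoCent (G.deleteEdges {e₂}) v <
        infoCent (G.deleteEdges {e₁}) v - infoCent (G.deleteEdges {e₁, e₂}) v := by
  have hconn := connected_exampleGraph_delete₁₂
  refine ⟨exampleGraph, 0, s(0, 1), s(0, 2), hconn.mono (SimpleGraph.deleteEdges_le _),
    by decide, by decide, by decide,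
    hconn.mono (SimpleGraph.deleteEdges_anti (by simp)),
    hconn.mono (SimpleGraph.deleteEdges_anti (by simp)), hconn, ?_⟩
  simp only [infoCent, resDist_exampleGraph, resDist_exampleGraph_delete₁,
    resDist_exampleGraph_delete₂, resDist_exampleGraph_delete₁₂]
  norm_num
end

section
/- Sampling sum estimation: given n elements x₁,…,xₙ ∈ [0,a] and β > a·n^{−1/2}·(log n)^{1/2}, if each element is independently included in a sample with probability p = a·n^{−1/2}·(log n)^{1/2}/β ∈ (0,1) and x̄ = (Σ over sampled elements)/p, then with high probability |Σᵢ xᵢ − x̄| ≤ nβ. -/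
open Matrix Finset
open scoped Classical

/-!
The deviation `∑ xᵢ - x̄` is the sum of the independent centred two-point variables
`xᵢ - [i sampled] xᵢ / p`, whose ranges are `xᵢ / p ≤ a / p`. Hoeffding's lemma bounds each
factor of the Chernoff bound, so each tail has probability at most
`exp (-2 (nβ)² / (n (a/p)²)) = exp (-2nβ²p²/a²)`; the union of the two tails gives the factor 2.
-/

open Real

open ProbabilityTheory MeasureTheory in
theorem two_point_mgf_le {p u v : ℝ} (hp0 : 0 ≤ p) (hp1 : p ≤ 1)
    (hmean : p * u + (1 - p) * v = 0) :
    p * exp u + (1 - p) * exp v ≤ exp ((u - v) ^ 2 / 8) := by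
  let μ : Measure Bool := Ber(true, false, ⟨p, hp0, hp1⟩)
  let X : Bool → ℝ := fun b => if b then u else v
  have hX : HasSubgaussianMGF X ((‖max u v - min u v‖₊ / 2) ^ 2) μ := by
    refine hasSubgaussianMGF_of_mem_Icc_of_integral_eq_zero (by fun_prop) ?_ ?_
    · refine Filter.Eventually.of_forall fun b => ?_
      cases b <;> simp [X]
    · simpa [μ, X, integral_bernoulliMeasure] using hmean
  calc p * exp u + (1 - p) * exp v = mgf X μ 1 := by
        simp [mgf, μ, X, integral_bernoulliMeasure]
    _ ≤ exp ((‖max u v - min u v‖₊ / 2) ^ 2 * 1 ^ 2 / 2) := hX.mgf_le 1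
    _ = exp ((u - v) ^ 2 / 8) := by
        push_cast
        rw [norm_eq_abs, max_sub_min_eq_abs, abs_abs, div_pow, sq_abs]
        ring_nf

section BernoulliProduct

variable {ι : Type*} [Fintype ι] {p : ℝ}

theorem bernoulliWeight_nonneg (hp0 : 0 ≤ p) (hp1 : p ≤ 1) (s : ι → Bool) :
    0 ≤ ∏ i, if s i then p else 1 - p :=
  prod_nonneg fun i _ => by split <;> linarith

variable [DecidableEq ι]

/-- The probability of `E` when each `i : ι` is sampled independently with probability `p`. -/
noncomputable def bernoulliProb (p : ℝ) (E : (ι → Bool) → Prop) [DecidablePred E] : ℝ :=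
  ∑ s : ι → Bool, (∏ i, if s i then p else 1 - p) * if E s then 1 else 0

theorem bernoulliProb_mono (hp0 : 0 ≤ p) (hp1 : p ≤ 1) {E F : (ι → Bool) → Prop}
    [DecidablePred E] [DecidablePred F] (h : ∀ s, E s → F s) :
    bernoulliProb p E ≤ bernoulliProb p F := by
  refine sum_le_sum fun s _ => mul_le_mul_of_nonneg_left ?_ (bernoulliWeight_nonneg hp0 hp1 s)
  split_ifs with hE hF <;> simp_all

theorem bernoulliProb_or_le (hp0 : 0 ≤ p) (hp1 : p ≤ 1) (E F : (ι → Bool) → Prop)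
    [DecidablePred E] [DecidablePred F] :
    bernoulliProb p (fun s => E s ∨ F s) ≤ bernoulliProb p E + bernoulliProb p F := by
  rw [bernoulliProb, bernoulliProb, bernoulliProb, ← sum_add_distrib]
  refine sum_le_sum fun s _ => ?_
  rw [← mul_add]
  refine mul_le_mul_of_nonneg_left ?_ (bernoulliWeight_nonneg hp0 hp1 s)
  split_ifs <;> simp_all

/-- Chernoff's bound: Markov's inequality for `exp (l * ∑ i, g i (s i))`. -/
theorem bernoulliProb_lt_sum_le_chernoff (hp0 : 0 ≤ p) (hp1 : p ≤ 1) {t l : ℝ} (hl : 0 ≤ l)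
    (g : ι → Bool → ℝ) :
    bernoulliProb p (fun s => t < ∑ i, g i (s i)) ≤
      exp (-l * t) * ∏ i, (p * exp (l * g i true) + (1 - p) * exp (l * g i false)) := by
  calc bernoulliProb p (fun s => t < ∑ i, g i (s i))
      ≤ ∑ s : ι → Bool, (∏ i, if s i then p else 1 - p) * exp (l * (∑ i, g i (s i) - t)) := by
        refine sum_le_sum fun s _ => mul_le_mul_of_nonneg_left ?_ (bernoulliWeight_nonneg hp0 hp1 s)
        split_ifs with h
        · exact one_le_exp (mul_nonneg hl (sub_nonneg.2 h.le))
        · exact (exp_pos _).le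
    _ = exp (-l * t) * ∑ s : ι → Bool, ∏ i, (if s i then p else 1 - p) * exp (l * g i (s i)) := by
        rw [mul_sum]
        refine sum_congr rfl fun s _ => ?_
        rw [prod_mul_distrib, ← exp_sum, ← mul_sum, mul_left_comm, ← exp_add]
        ring_nf
    _ = exp (-l * t) * ∏ i, ∑ b : Bool, (if b then p else 1 - p) * exp (l * g i b) := by
        rw [Fintype.prod_sum]
    _ = exp (-l * t) * ∏ i, (p * exp (l * g i true) + (1 - p) * exp (l * g i false)) := by
        simp

theorem bernoulliProb_lt_sum_le_hoeffding (hp0 : 0 ≤ p) (hp1 : p ≤ 1) {t c : ℝ} (ht : 0 ≤ t)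
    (g : ι → Bool → ℝ) (hmean : ∀ i, p * g i true + (1 - p) * g i false = 0)
    (hrange : ∀ i, |g i true - g i false| ≤ c) :
    bernoulliProb p (fun s => t < ∑ i, g i (s i)) ≤
      exp (-2 * t ^ 2 / (Fintype.card ι * c ^ 2)) := by
  -- minimises `-l * t + card ι * l ^ 2 * c ^ 2 / 8`
  set l := 4 * t / (Fintype.card ι * c ^ 2)
  have hl : 0 ≤ l := by positivity
  have hfactor : ∀ i, p * exp (l * g i true) + (1 - p) * exp (l * g i false) ≤
      exp (l ^ 2 * c ^ 2 / 8) := by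
    intro i
    refine (two_point_mgf_le hp0 hp1 ?_).trans (exp_le_exp.2 ?_)
    · linear_combination l * hmean i
    · have hsq : (g i true - g i false) ^ 2 ≤ c ^ 2 :=
        sq_le_sq' (abs_le.1 (hrange i)).1 (abs_le.1 (hrange i)).2
      rw [← mul_sub, mul_pow]
      gcongr
  calc bernoulliProb p (fun s => t < ∑ i, g i (s i))
      ≤ exp (-l * t) * ∏ _i : ι, exp (l ^ 2 * c ^ 2 / 8) := by
        refine (bernoulliProb_lt_sum_le_chernoff hp0 hp1 hl g).trans ?_
        refine mul_le_mul_of_nonneg_left (prod_le_prod (fun i _ => ?_) fun i _ => hfactor i)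
          (exp_pos _).le
        exact add_nonneg (mul_nonneg hp0 (exp_pos _).le)
          (mul_nonneg (sub_nonneg.2 hp1) (exp_pos _).le)
    _ = exp (-l * t + Fintype.card ι * (l ^ 2 * c ^ 2 / 8)) := by
        rw [prod_const, card_univ, ← exp_nat_mul, ← exp_add]
    _ = exp (-2 * t ^ 2 / (Fintype.card ι * c ^ 2)) := by
        congr 1
        rcases eq_or_ne ((Fintype.card ι : ℝ) * c ^ 2) 0 with h | h
        · -- `x / 0 = 0`, so `l = 0` and both exponents vanish
          simp [l, h]
        · simp only [l]
          field_simp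
          ring

theorem bernoulliProb_lt_abs_sum_le_hoeffding (hp0 : 0 ≤ p) (hp1 : p ≤ 1) {t c : ℝ} (ht : 0 ≤ t)
    (g : ι → Bool → ℝ) (hmean : ∀ i, p * g i true + (1 - p) * g i false = 0)
    (hrange : ∀ i, |g i true - g i false| ≤ c) :
    bernoulliProb p (fun s => t < |∑ i, g i (s i)|) ≤
      2 * exp (-2 * t ^ 2 / (Fintype.card ι * c ^ 2)) := by
  calc bernoulliProb p (fun s => t < |∑ i, g i (s i)|)
      ≤ bernoulliProb p (fun s => t < ∑ i, g i (s i) ∨ t < ∑ i, -g i (s i)) :=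
        bernoulliProb_mono hp0 hp1 fun s h => by rwa [sum_neg_distrib, ← lt_abs]
    _ ≤ _ := bernoulliProb_or_le hp0 hp1 _ _
    _ ≤ _ := by
      rw [two_mul]
      refine add_le_add (bernoulliProb_lt_sum_le_hoeffding hp0 hp1 ht g hmean hrange) ?_
      refine bernoulliProb_lt_sum_le_hoeffding hp0 hp1 ht (fun i b => -g i b) ?_ ?_
      · intro i; linear_combination -hmean i
      · intro i; rw [← abs_neg]; convert hrange i using 2; ring

end BernoulliProduct

theorem stmt_14_general {n : ℕ} (hn : 0 < n) (x : Fin n → ℝ) (a β p : ℝ) (ha : 0 < a)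
    (hx : ∀ i, x i ∈ Set.Icc (0 : ℝ) a)
    (hβ : β > a * Real.sqrt (Real.log n) / Real.sqrt n)
    (hp0 : 0 < p) (hp1 : p < 1) :
    (∑ s : Fin n → Bool,
        (∏ i, if s i then p else 1 - p) *
          (if n * β < |(∑ i, x i) - (∑ i, if s i then x i else 0) / p| then 1 else 0)) ≤
      2 * Real.exp (-2 * n * β ^ 2 * p ^ 2 / a ^ 2) := by
  let g : Fin n → Bool → ℝ := fun i b => x i - (if b then x i else 0) / p
  have hdev : ∀ s : Fin n → Bool,
      (∑ i, x i) - (∑ i, if s i then x i else 0) / p = ∑ i, g i (s i) := by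
    intro s
    rw [sum_sub_distrib, sum_div]
  have hmean : ∀ i, p * g i true + (1 - p) * g i false = 0 := by
    intro i
    simp only [g, if_true, Bool.false_eq_true, if_false, zero_div, sub_zero]
    field_simp
    ring
  have hrange : ∀ i, |g i true - g i false| ≤ a / p := by
    intro i
    simp only [g, if_true, Bool.false_eq_true, if_false, zero_div, sub_zero, sub_sub_cancel_left,
      abs_neg, abs_div, abs_of_pos hp0, abs_of_nonneg (hx i).1]
    gcongr
    exact (hx i).2
  have hβ0 : 0 ≤ β := le_trans (by positivity) hβ.le
  calc _ = bernoulliProb p (fun s => n * β < |∑ i, g i (s i)|) := by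
        simp only [bernoulliProb, hdev]
    _ ≤ 2 * exp (-2 * (n * β) ^ 2 / (Fintype.card (Fin n) * (a / p) ^ 2)) :=
        bernoulliProb_lt_abs_sum_le_hoeffding hp0.le hp1.le (by positivity) g hmean hrange
    _ = 2 * exp (-2 * n * β ^ 2 * p ^ 2 / a ^ 2) := by
        rw [Fintype.card_fin]
        field_simp

/-- Sampling sum estimation: for `x₁,…,xₙ ∈ [0,a]` and
`β > a·n^{-1/2}·(log n)^{1/2}`, sampling each element independently with probability
`p = a·n^{-1/2}·(log n)^{1/2}/β ∈ (0,1)` and forming the Horvitz–Thompson estimator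
`x̄ = (Σ over sampled)/p`, the probability that `|Σᵢ xᵢ - x̄| > nβ` is at most
`2·exp(-2nβ²p²/a²)`. The probability is written explicitly as a sum over all
Bernoulli sample outcomes `s : Fin n → Bool`. -/
theorem stmt_14 {n : ℕ} (hn : 0 < n) (x : Fin n → ℝ) (a β p : ℝ) (ha : 0 < a)
    (hx : ∀ i, x i ∈ Set.Icc (0 : ℝ) a)
    (hβ : β > a * Real.sqrt (Real.log n) / Real.sqrt n)
    (hp : p = a * Real.sqrt (Real.log n) / (Real.sqrt n * β))
    (hp0 : 0 < p) (hp1 : p < 1) :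
    (∑ s : Fin n → Bool,
        (∏ i, if s i then p else 1 - p) *
          (if n * β < |(∑ i, x i) - (∑ i, if s i then x i else 0) / p| then 1 else 0)) ≤
      2 * Real.exp (-2 * n * β ^ 2 * p ^ 2 / a ^ 2) :=
  stmt_14_general hn x a β p ha hx hβ hp0 hp1
end
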